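/- Existence and uniqueness of the mean-field fixed point: if sup_{ψ ∈ [0,1]^V} |F̃(ψ)| < 1/|V|, then there exists a unique ψ* ∈ [0,1]^V with ψ* = σ(∇F̃(ψ*)), and for any starting point ψ^(0) ∈ [0,1]^V, the iterates ψ^(k+1) = σ(∇F̃(ψ^(k))) converge to ψ*. -/

import Mathlib

/-!
Since `F̃` is affine in each coordinate, `∂ᵢF̃(ψ) = F̃(ψ[i ↦ 1]) - F̃(ψ[i ↦ 0])`, and changing the
coordinates of a point of the cube one at a time shows that `F̃` is `2M`-Lipschitz there for the
`ℓ¹` distance, where `M = sup |F̃|` on the cube. Hence every `∂ᵢF̃` is `4M|V|`-Lipschitz for the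
sup distance, and since `σ` is `1/4`-Lipschitz, `ψ ↦ σ(∇F̃(ψ))` is a self-map of the cube with
Lipschitz constant `M|V| < 1`. Banach's fixed point theorem on the complete cube concludes.
-/

open Real Finset

noncomputable def mlext {n : ℕ} (F : Finset (Fin n) → ℝ) (ψ : Fin n → ℝ) : ℝ :=
  ∑ S : Finset (Fin n), F S * ((∏ j ∈ S, ψ j) * ∏ j ∈ Sᶜ, (1 - ψ j))

noncomputable def pd {n : ℕ} (i : Fin n) (f : (Fin n → ℝ) → ℝ) (ψ : Fin n → ℝ) : ℝ :=
  deriv (fun t => f (Function.update ψ i t)) (ψ i)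

noncomputable def sigmoid (x : ℝ) : ℝ := (1 + Real.exp (-x))⁻¹

open Function Filter Topology NNReal

theorem Real.lipschitzWith_sigmoid : LipschitzWith 4⁻¹ Real.sigmoid := by
  refine lipschitzWith_of_nnnorm_deriv_le differentiable_sigmoid fun x => ?_
  have h0 := Real.sigmoid_nonneg x
  have h1 := Real.sigmoid_le_one x
  rw [Real.deriv_sigmoid, ← NNReal.coe_le_coe, coe_nnnorm, Real.norm_eq_abs,
    abs_of_nonneg (mul_nonneg h0 (sub_nonneg.2 h1))]
  push_cast
  nlinarith [sq_nonneg (Real.sigmoid x - 2⁻¹)]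

theorem exists_isFixedPt_forall_tendsto_iterate_of_lipschitzOnWith {α : Type*} [MetricSpace α]
    {s : Set α} (hsc : IsComplete s) (hs : s.Nonempty) {f : α → α} (hsf : Set.MapsTo f s s)
    {K : ℝ≥0} (hK : K < 1) (hf : LipschitzOnWith K f s) :
    ∃ y ∈ s, IsFixedPt f y ∧ (∀ x ∈ s, IsFixedPt f x → x = y) ∧
      ∀ x ∈ s, Tendsto (fun k => f^[k] x) atTop (𝓝 y) := by
  have hcontr : ContractingWith K (hsf.restrict f s s) := ⟨hK, hf.mapsToRestrict hsf⟩
  have hunique : ∀ x ∈ s, ∀ y ∈ s, IsFixedPt f x → IsFixedPt f y → x = y :=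
    fun x hx y hy hfx hfy => congrArg Subtype.val <|
      (hcontr.eq_or_edist_eq_top_of_fixedPoints (x := ⟨x, hx⟩) (y := ⟨y, hy⟩)
        (Subtype.ext hfx) (Subtype.ext hfy)).resolve_right (edist_ne_top _ _)
  obtain ⟨x₀, hx₀⟩ := hs
  obtain ⟨y, hys, hfy, -⟩ := hcontr.exists_fixedPoint' hsc hsf hx₀ (edist_ne_top _ _)
  refine ⟨y, hys, hfy, fun x hx hfx => hunique x hx y hys hfx hfy, fun x hx => ?_⟩
  obtain ⟨z, hzs, hfz, hxz, -⟩ := hcontr.exists_fixedPoint' hsc hsf hx (edist_ne_top _ _)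
  rwa [hunique z hzs y hys hfz hfy] at hxz

theorem update_mem_Icc {ι : Type*} {α : ι → Type*} [DecidableEq ι] [∀ i, Preorder (α i)]
    {a b x : ∀ i, α i} (hx : x ∈ Set.Icc a b) {i : ι} {c : α i} (hc : c ∈ Set.Icc (a i) (b i)) :
    update x i c ∈ Set.Icc a b :=
  ⟨le_update_iff.2 ⟨hc.1, fun j _ => hx.1 j⟩, update_le_iff.2 ⟨hc.2, fun j _ => hx.2 j⟩⟩

theorem abs_sub_le_mul_sum_of_abs_update_sub_le {ι : Type*} [Fintype ι] [DecidableEq ι]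
    {f : (ι → ℝ) → ℝ} {a b : ι → ℝ} {L : ℝ}
    (hf : ∀ x ∈ Set.Icc a b, ∀ i t, |f (update x i t) - f x| ≤ L * |t - x i|)
    {φ ψ : ι → ℝ} (hφ : φ ∈ Set.Icc a b) (hψ : ψ ∈ Set.Icc a b) :
    |f φ - f ψ| ≤ L * ∑ j, |φ j - ψ j| := by
  suffices key : ∀ s : Finset ι, |f (s.piecewise φ ψ) - f ψ| ≤ L * ∑ j ∈ s, |φ j - ψ j| by
    simpa using key univ
  intro s
  induction s using Finset.induction_on with
  | empty => simp
  | @insert j s hj ih =>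
    have hstep := hf _ (s.piecewise_mem_Icc_of_mem_of_mem hφ hψ) j (φ j)
    rw [s.piecewise_eq_of_notMem _ _ hj] at hstep
    calc |f ((insert j s).piecewise φ ψ) - f ψ|
        ≤ |f (update (s.piecewise φ ψ) j (φ j)) - f (s.piecewise φ ψ)|
          + |f (s.piecewise φ ψ) - f ψ| := by
          rw [Finset.piecewise_insert]; exact abs_sub_le _ _ _
      _ ≤ L * |φ j - ψ j| + L * ∑ i ∈ s, |φ i - ψ i| := add_le_add hstep ih
      _ = L * ∑ i ∈ insert j s, |φ i - ψ i| := by rw [sum_insert hj]; ring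

section MeanField

variable {n : ℕ} (F : Finset (Fin n) → ℝ)

theorem continuous_mlext : Continuous (mlext F) := by
  unfold mlext; fun_prop

theorem mlext_update (ψ : Fin n → ℝ) (i : Fin n) (t : ℝ) :
    mlext F (update ψ i t)
      = (1 - t) * mlext F (update ψ i 0) + t * mlext F (update ψ i 1) := by
  simp only [mlext, mul_sum, ← sum_add_distrib]
  refine sum_congr rfl fun S _ => ?_
  have hcompl : ∀ u, (fun j => 1 - update ψ i u j) = update (fun j => 1 - ψ j) i (1 - u) :=
    comp_update (fun x => 1 - x) ψ i
  simp only [hcompl]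
  by_cases hi : i ∈ S
  · have hic : i ∉ Sᶜ := by simpa
    simp only [prod_update_of_mem hi, prod_update_of_notMem hic]; ring
  · have hic : i ∈ Sᶜ := by simpa
    simp only [prod_update_of_mem hic, prod_update_of_notMem hi]; ring

theorem hasDerivAt_mlext_update (ψ : Fin n → ℝ) (i : Fin n) (t : ℝ) :
    HasDerivAt (fun t => mlext F (update ψ i t))
      (mlext F (update ψ i 1) - mlext F (update ψ i 0)) t := by
  rw [funext (mlext_update F ψ i)]
  exact ((((hasDerivAt_id' t).const_sub 1).mul_const _).add
    ((hasDerivAt_id' t).mul_const _)).congr_deriv (by ring)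

theorem pd_mlext (ψ : Fin n → ℝ) (i : Fin n) :
    pd i (mlext F) ψ = mlext F (update ψ i 1) - mlext F (update ψ i 0) :=
  (hasDerivAt_mlext_update F ψ i (ψ i)).deriv

theorem abs_mlext_le_sSup {φ : Fin n → ℝ} (hφ : φ ∈ Set.Icc 0 1) :
    |mlext F φ| ≤ sSup ((fun φ => |mlext F φ|) '' Set.Icc 0 1) :=
  le_csSup (isCompact_Icc.image (continuous_mlext F).abs).bddAbove (Set.mem_image_of_mem _ hφ)

-- `_root_.sigmoid` is definitionally `Real.sigmoid`, whose Mathlib API is used below.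
noncomputable def meanFieldMap (φ : Fin n → ℝ) : Fin n → ℝ :=
  fun i => _root_.sigmoid (pd i (mlext F) φ)

theorem mapsTo_meanFieldMap :
    Set.MapsTo (meanFieldMap F) (Set.Icc 0 1) (Set.Icc 0 1) :=
  fun _ _ => ⟨fun _ => Real.sigmoid_nonneg _, fun _ => Real.sigmoid_le_one _⟩

variable {F} {M : ℝ} (hM : ∀ φ ∈ Set.Icc (0 : Fin n → ℝ) 1, |mlext F φ| ≤ M)
include hM

theorem abs_mlext_update_sub_le {x : Fin n → ℝ} (hx : x ∈ Set.Icc 0 1) (i : Fin n) (t : ℝ) :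
    |mlext F (update x i t) - mlext F x| ≤ 2 * M * |t - x i| := by
  have hslope : |mlext F (update x i 1) - mlext F (update x i 0)| ≤ 2 * M := by
    linarith [abs_sub (mlext F (update x i 1)) (mlext F (update x i 0)),
      hM (update x i 0) (update_mem_Icc hx ⟨le_rfl, zero_le_one⟩),
      hM (update x i 1) (update_mem_Icc hx ⟨zero_le_one, le_rfl⟩)]
  have hslice : mlext F (update x i t) - mlext F x
      = (t - x i) * (mlext F (update x i 1) - mlext F (update x i 0)) := by
    conv_lhs => rw [← update_eq_self i x, mlext_update F _ i t, mlext_update F _ i (x i)]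
    simp only [update_idem]
    ring
  rw [hslice, abs_mul, mul_comm]
  exact mul_le_mul_of_nonneg_right hslope (abs_nonneg _)

theorem abs_mlext_sub_le {φ ψ : Fin n → ℝ} (hφ : φ ∈ Set.Icc 0 1) (hψ : ψ ∈ Set.Icc 0 1) :
    |mlext F φ - mlext F ψ| ≤ 2 * M * ∑ j, |φ j - ψ j| :=
  abs_sub_le_mul_sum_of_abs_update_sub_le (fun _ hx => abs_mlext_update_sub_le hM hx) hφ hψ

theorem abs_pd_mlext_sub_le {φ ψ : Fin n → ℝ} (hφ : φ ∈ Set.Icc 0 1) (hψ : ψ ∈ Set.Icc 0 1)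
    (i : Fin n) : |pd i (mlext F) φ - pd i (mlext F) ψ| ≤ 4 * M * n * dist φ ψ := by
  have hM₀ : 0 ≤ M := (abs_nonneg _).trans (hM 0 ⟨le_rfl, zero_le_one⟩)
  have hface : ∀ c ∈ Set.Icc (0 : ℝ) 1,
      |mlext F (update φ i c) - mlext F (update ψ i c)| ≤ 2 * M * n * dist φ ψ := by
    intro c hc
    calc |mlext F (update φ i c) - mlext F (update ψ i c)|
        ≤ 2 * M * ∑ j, |update φ i c j - update ψ i c j| :=
          abs_mlext_sub_le hM (update_mem_Icc hφ hc) (update_mem_Icc hψ hc)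
      _ ≤ 2 * M * ∑ _j : Fin n, dist φ ψ := by
          gcongr with j
          rcases eq_or_ne j i with rfl | hj
          · simp
          · simpa [update_of_ne hj, Real.dist_eq] using dist_le_pi_dist φ ψ j
      _ = 2 * M * n * dist φ ψ := by simp; ring
  rw [pd_mlext, pd_mlext, sub_sub_sub_comm]
  linarith [abs_sub (mlext F (update φ i 1) - mlext F (update ψ i 1))
      (mlext F (update φ i 0) - mlext F (update ψ i 0)),
    hface 1 ⟨zero_le_one, le_rfl⟩, hface 0 ⟨le_rfl, zero_le_one⟩]

theorem lipschitzOnWith_meanFieldMap :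
    LipschitzOnWith (M * n).toNNReal (meanFieldMap F) (Set.Icc 0 1) := by
  refine LipschitzOnWith.of_dist_le_mul fun φ hφ ψ hψ =>
    (dist_pi_le_iff (by positivity)).2 fun i => ?_
  calc dist (meanFieldMap F φ i) (meanFieldMap F ψ i)
      ≤ 4⁻¹ * dist (pd i (mlext F) φ) (pd i (mlext F) ψ) :=
        Real.lipschitzWith_sigmoid.dist_le_mul _ _
    _ ≤ 4⁻¹ * (4 * M * n * dist φ ψ) := by
        gcongr
        exact abs_pd_mlext_sub_le hM hφ hψ i
    _ = M * n * dist φ ψ := by ring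
    _ ≤ (M * n).toNNReal * dist φ ψ := by gcongr; exact Real.le_coe_toNNReal _

end MeanField

theorem mean_field_fixed_point_exists_unique_general {n : ℕ}
    (F : Finset (Fin n) → ℝ)
    (hsup : sSup ((fun φ => |mlext F φ|) '' {φ : Fin n → ℝ | ∀ k, φ k ∈ Set.Icc (0:ℝ) 1})
      < 1 / n) :
    ∃ ψs : Fin n → ℝ,
      ((∀ k, ψs k ∈ Set.Icc (0:ℝ) 1) ∧ (∀ i, ψs i = _root_.sigmoid (pd i (mlext F) ψs))) ∧
      (∀ φ : Fin n → ℝ, (∀ k, φ k ∈ Set.Icc (0:ℝ) 1) →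
        (∀ i, φ i = _root_.sigmoid (pd i (mlext F) φ)) → φ = ψs) ∧
      (∀ ψ0 : Fin n → ℝ, (∀ k, ψ0 k ∈ Set.Icc (0:ℝ) 1) →
        Filter.Tendsto
          (fun k => (fun φ i => _root_.sigmoid (pd i (mlext F) φ))^[k] ψ0)
          Filter.atTop (nhds ψs)) := by
  have hcube : ∀ φ : Fin n → ℝ, (∀ k, φ k ∈ Set.Icc (0:ℝ) 1) ↔ φ ∈ Set.Icc 0 1 := fun φ => by
    simp [Pi.le_def, forall_and]
  simp only [hcube, Set.ofPred_mem_eq] at hsup ⊢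
  set M := sSup ((fun φ => |mlext F φ|) '' Set.Icc (0 : Fin n → ℝ) 1)
  have hMn : M * n < 1 := by
    rcases n.eq_zero_or_pos with rfl | hn
    · simp
    · rwa [lt_div_iff₀ (by positivity)] at hsup
  obtain ⟨ψs, hψs, hfix, hunique, htendsto⟩ :=
    exists_isFixedPt_forall_tendsto_iterate_of_lipschitzOnWith isClosed_Icc.isComplete
      (Set.nonempty_Icc.2 zero_le_one) (mapsTo_meanFieldMap F) (Real.toNNReal_lt_one.2 hMn)
      (lipschitzOnWith_meanFieldMap fun _ => abs_mlext_le_sSup F)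
  exact ⟨ψs, ⟨hψs, fun i => (congrFun hfix i).symm⟩,
    fun φ hφ hφfix => hunique φ hφ (funext hφfix).symm, htendsto⟩

theorem mean_field_fixed_point_exists_unique {n : ℕ} (hn : 1 ≤ n)
    (F : Finset (Fin n) → ℝ)
    (hsup : sSup ((fun φ => |mlext F φ|) '' {φ : Fin n → ℝ | ∀ k, φ k ∈ Set.Icc (0:ℝ) 1})
      < 1 / n) :
    ∃ ψs : Fin n → ℝ,
      ((∀ k, ψs k ∈ Set.Icc (0:ℝ) 1) ∧ (∀ i, ψs i = _root_.sigmoid (pd i (mlext F) ψs))) ∧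
      (∀ φ : Fin n → ℝ, (∀ k, φ k ∈ Set.Icc (0:ℝ) 1) →
        (∀ i, φ i = _root_.sigmoid (pd i (mlext F) φ)) → φ = ψs) ∧
      (∀ ψ0 : Fin n → ℝ, (∀ k, ψ0 k ∈ Set.Icc (0:ℝ) 1) →
        Filter.Tendsto
          (fun k => (fun φ i => _root_.sigmoid (pd i (mlext F) φ))^[k] ψ0)
          Filter.atTop (nhds ψs)) :=
  mean_field_fixed_point_exists_unique_general F hsup
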